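/- arXiv:0911.5503 — 7 statements merged into one kernel-verified Lean document; each statement's English description precedes it below -/
import Mathlib

section
/- Let C be a convex set of P-a.s. nonnegative random variables on a probability space (Ω, F, P). Then there exists no arbitrage of the first kind relative to C if and only if C is bounded in probability. -/
/-!
If `C` is not bounded in probability, the level function `n ↦ sup_{f ∈ C} P(f ≥ n)` decreases to
some `t > 0`. Convexity makes it nearly constant far out: if `f, g ∈ C` both reach level `2n` on
their respective sets, the midpoint `(f + g) / 2 ∈ C` reaches level `n` on the union, so the union
has probability at most `sup_{h ∈ C} P(h ≥ n)`. Choosing levels `n_k → ∞` where the level function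
is within `δ_k` of `t`, and `f_k ∈ C` with `P(f_k ≥ 2 n_k) > t - δ_k`, consecutive sets
`{f_k ≥ 2 n_k}` differ by at most `δ_k + δ_{k+1}`; for summable `δ` their intersection `B` has
positive probability, and `1_B` is an arbitrage of the first kind since `f_k ≥ 2 n_k → ∞` on `B`.
Conversely, if `P(ξ > δ) > 0` and `ξ ≤ (δ / M) f` with `f ∈ C`, then `P(f > M) ≥ P(ξ > δ)`.
-/

open MeasureTheory Filter Set ENNReal

lemma diff_iInter_subset_iUnion_diff_succ {α : Type*} (A : ℕ → Set α) :
    A 0 \ ⋂ k, A k ⊆ ⋃ k, A k \ A (k + 1) := by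
  rintro ω ⟨h0, hω⟩
  by_contra! h
  refine hω (mem_iInter.2 fun k => ?_)
  induction k with
  | zero => exact h0
  | succ k ih => exact by_contra fun hk => h (mem_iUnion.2 ⟨k, ih, hk⟩)

section Measure

variable {α : Type*} [MeasurableSpace α] (μ : Measure α)

lemma measure_le_measure_iInter_add_tsum_diff_succ (A : ℕ → Set α) :
    μ (A 0) ≤ μ (⋂ k, A k) + ∑' k, μ (A k \ A (k + 1)) :=
  (measure_le_inter_add_sdiff μ (A 0) (⋂ k, A k)).trans <|
    add_le_add (measure_mono inter_subset_right)
      ((measure_mono (diff_iInter_subset_iUnion_diff_succ A)).trans (measure_iUnion_le _))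

lemma measure_iInter_ne_zero_of_measure_diff_succ_le {A : ℕ → Set α} {t : ℝ≥0∞}
    {δ : ℕ → ℝ≥0∞} (h₀ : t < μ (A 0) + δ 0) (hA : ∀ k, μ (A k \ A (k + 1)) ≤ δ k + δ (k + 1))
    (hδ : ∑' k, δ k < t / 2) : μ (⋂ k, A k) ≠ 0 := fun h => by
  refine lt_irrefl t ?_
  calc t < μ (A 0) + δ 0 := h₀
    _ ≤ μ (⋂ k, A k) + ∑' k, μ (A k \ A (k + 1)) + δ 0 := by
        gcongr; exact measure_le_measure_iInter_add_tsum_diff_succ μ A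
    _ ≤ ∑' k, (δ k + δ (k + 1)) + δ 0 := by
        rw [h, zero_add]; gcongr with k; exact hA k
    _ = ∑' k, δ k + ∑' k, δ k := by
        rw [ENNReal.tsum_add, tsum_eq_zero_add' ENNReal.summable]; ring
    _ < t / 2 + t / 2 := ENNReal.add_lt_add hδ hδ
    _ = t := ENNReal.add_halves t

end Measure

lemma Antitone.exists_strictMono_lt_iInf_add {u : ℕ → ℝ≥0∞} (hu : Antitone u)
    (hu_top : ⨅ n, u n ≠ ∞) {δ : ℕ → ℝ≥0∞} (hδ : ∀ k, δ k ≠ 0) :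
    ∃ φ : ℕ → ℕ, StrictMono φ ∧ ∀ k, u (φ k) < (⨅ n, u n) + δ k :=
  extraction_forall_of_eventually fun k =>
    (tendsto_atTop_iInf hu).eventually_lt_const (ENNReal.lt_add_right hu_top (hδ k))

section ArbitrageOfFirstKind

variable {Ω : Type*} [MeasurableSpace Ω] {P : Measure Ω} {C : Set (Ω → ℝ)}

def IsArbitrageOfFirstKind (P : Measure Ω) (C : Set (Ω → ℝ)) (ξ : Ω → ℝ) : Prop :=
  Measurable ξ ∧ (∀ᵐ ω ∂P, 0 ≤ ξ ω) ∧ 0 < P {ω | 0 < ξ ω} ∧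
    ∀ x : ℝ, 0 < x → ∃ f ∈ C, ∀ᵐ ω ∂P, ξ ω ≤ x * f ω

def BoundedInProbability (P : Measure Ω) (C : Set (Ω → ℝ)) : Prop :=
  ∀ ε : ℝ, 0 < ε → ∃ M : ℝ, 0 < M ∧ ∀ f ∈ C, P {ω | M < f ω} ≤ ENNReal.ofReal ε

theorem BoundedInProbability.not_isArbitrageOfFirstKind (hC : BoundedInProbability P C)
    (ξ : Ω → ℝ) : ¬ IsArbitrageOfFirstKind P C ξ := by
  rintro ⟨-, -, hξ_pos, hξ_dom⟩
  obtain ⟨n, hn⟩ : ∃ n : ℕ, P {ω | 1 / (n + 1 : ℝ) < ξ ω} ≠ 0 := by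
    by_contra! h
    refine hξ_pos.ne' (measure_mono_null (fun ω hω => ?_) (measure_iUnion_null h))
    obtain ⟨n, hn⟩ := exists_nat_one_div_lt (K := ℝ) hω
    exact mem_iUnion.2 ⟨n, hn⟩
  set δ : ℝ := 1 / (n + 1 : ℝ)
  obtain ⟨ε, -, hε_pos, hε_lt⟩ := ENNReal.lt_iff_exists_real_btwn.1 (pos_iff_ne_zero.2 hn)
  obtain ⟨M, hM, hCM⟩ := hC ε (ENNReal.ofReal_pos.1 hε_pos)
  obtain ⟨f, hf, hξf⟩ := hξ_dom (δ / M) (by positivity)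
  have hsub : P {ω | δ < ξ ω} ≤ P {ω | M < f ω} := by
    refine measure_mono_ae (hξf.mono fun ω hω (hδ : δ < ξ ω) => ?_)
    have h := hδ.trans_le hω
    rw [div_mul_eq_mul_div, lt_div_iff₀ hM] at h
    exact lt_of_mul_lt_mul_left h (by positivity)
  exact (hsub.trans (hCM f hf)).not_gt hε_lt

noncomputable def tailSup (P : Measure Ω) (C : Set (Ω → ℝ)) (n : ℕ) : ℝ≥0∞ :=
  ⨆ f ∈ C, P {ω | (n : ℝ) ≤ f ω}

lemma measure_le_tailSup {f : Ω → ℝ} (hf : f ∈ C) (n : ℕ) :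
    P {ω | (n : ℝ) ≤ f ω} ≤ tailSup P C n :=
  le_iSup₂ (f := fun f _ => P {ω | (n : ℝ) ≤ f ω}) f hf

lemma tailSup_antitone : Antitone (tailSup P C) := fun m n hmn =>
  iSup₂_mono fun f _ => measure_mono fun ω (hω : (n : ℝ) ≤ f ω) =>
    show (m : ℝ) ≤ f ω from (Nat.cast_le.2 hmn).trans hω

lemma tailSup_le_measure_univ (n : ℕ) : tailSup P C n ≤ P univ :=
  iSup₂_le fun _ _ => measure_mono (subset_univ _)

lemma exists_lt_measure_add_of_le_tailSup {t ε : ℝ≥0∞} {n : ℕ} (ht : t ≤ tailSup P C n)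
    (ht_top : t ≠ ∞) (ht₀ : t ≠ 0) (hε : ε ≠ 0) :
    ∃ f ∈ C, t < P {ω | (n : ℝ) ≤ f ω} + ε := by
  obtain ⟨f, hf, hlt⟩ := lt_biSup_iff.1 ((ENNReal.sub_lt_self ht_top ht₀ hε).trans_le ht)
  exact ⟨f, hf, ENNReal.lt_add_of_sub_lt_right (.inl ht_top) hlt⟩

lemma measure_union_le_tailSup (hC : Convex ℝ C) (hC₀ : ∀ f ∈ C, 0 ≤ᵐ[P] f) {f g : Ω → ℝ}
    (hf : f ∈ C) (hg : g ∈ C) (n : ℕ) :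
    P ({ω | 2 * (n : ℝ) ≤ f ω} ∪ {ω | 2 * (n : ℝ) ≤ g ω}) ≤ tailSup P C n := by
  refine (measure_mono_ae ?_).trans (measure_le_tailSup (hC.midpoint_mem hf hg) n)
  filter_upwards [hC₀ f hf, hC₀ g hg] with ω hfω hgω hω
  have hmid : midpoint ℝ f g ω = 2⁻¹ * (f ω + g ω) := by simp [midpoint_eq_smul_add]
  change (n : ℝ) ≤ midpoint ℝ f g ω
  rcases hω with (hω : 2 * (n : ℝ) ≤ f ω) | (hω : 2 * (n : ℝ) ≤ g ω) <;>
    simp only [Pi.zero_apply] at hfω hgω <;> linarith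

lemma iInf_tailSup_ne_zero_of_not_boundedInProbability (h : ¬ BoundedInProbability P C) :
    ⨅ n, tailSup P C n ≠ 0 := by
  unfold BoundedInProbability at h
  push Not at h
  obtain ⟨ε, hε, h⟩ := h
  have hle : ENNReal.ofReal ε ≤ ⨅ n, tailSup P C n := le_iInf fun n => by
    obtain ⟨f, hf, hfn⟩ := h (n + 1) (by positivity)
    refine hfn.le.trans ((measure_mono fun ω (hω : (n : ℝ) + 1 < f ω) => ?_).trans
      (measure_le_tailSup hf n))
    show (n : ℝ) ≤ f ω
    linarith
  exact ((ENNReal.ofReal_pos.2 hε).trans_le hle).ne'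

theorem exists_measure_ne_zero_forall_le_of_iInf_tailSup_ne_zero [IsFiniteMeasure P]
    (hC : Convex ℝ C) (hC_meas : ∀ f ∈ C, Measurable f) (hC₀ : ∀ f ∈ C, 0 ≤ᵐ[P] f)
    (ht : ⨅ n, tailSup P C n ≠ 0) :
    ∃ B, MeasurableSet B ∧ P B ≠ 0 ∧
      ∃ f : ℕ → Ω → ℝ, (∀ k, f k ∈ C) ∧ ∀ k : ℕ, ∀ ω ∈ B, (k : ℝ) ≤ f k ω := by
  set t := ⨅ n, tailSup P C n
  have ht_top : t ≠ ∞ := ne_top_of_le_ne_top (measure_ne_top P univ)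
    ((iInf_le _ 0).trans (tailSup_le_measure_univ 0))
  obtain ⟨δ, hδ_pos, hδ_sum⟩ := ENNReal.exists_pos_sum_of_countable' (ENNReal.half_pos ht).ne' ℕ
  obtain ⟨φ, hφ, hφt⟩ :=
    tailSup_antitone.exists_strictMono_lt_iInf_add ht_top fun k => (hδ_pos k).ne'
  have hf : ∀ k, ∃ f ∈ C, t < P {ω | 2 * (φ k : ℝ) ≤ f ω} + δ k := fun k => by
    simpa using exists_lt_measure_add_of_le_tailSup (iInf_le _ (2 * φ k)) ht_top ht (hδ_pos k).ne'
  choose f hfC hft using hf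
  set A : ℕ → Set Ω := fun k => {ω | 2 * (φ k : ℝ) ≤ f k ω}
  have hA_meas : ∀ k, MeasurableSet (A k) := fun k =>
    measurableSet_le measurable_const (hC_meas _ (hfC k))
  have hA_diff : ∀ k, P (A k \ A (k + 1)) ≤ δ k + δ (k + 1) := fun k => by
    have hsub : A (k + 1) ⊆ {ω | 2 * (φ k : ℝ) ≤ f (k + 1) ω} := by
      intro ω (hω : 2 * (φ (k + 1) : ℝ) ≤ f (k + 1) ω)
      have hφk : (φ k : ℝ) ≤ φ (k + 1) := Nat.cast_le.2 (hφ.monotone k.le_succ)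
      exact show 2 * (φ k : ℝ) ≤ f (k + 1) ω by linarith
    rw [measure_sdiff' _ (hA_meas _).nullMeasurableSet (measure_ne_top _ _)]
    refine (ENNReal.sub_lt_of_lt_add (measure_mono subset_union_right) ?_).le
    calc P (A k ∪ A (k + 1))
        ≤ tailSup P C (φ k) := (measure_mono (union_subset_union_right _ hsub)).trans
          (measure_union_le_tailSup hC hC₀ (hfC k) (hfC (k + 1)) (φ k))
      _ < t + δ k := hφt k
      _ ≤ P (A (k + 1)) + δ (k + 1) + δ k := by gcongr; exact (hft (k + 1)).le
      _ = δ k + δ (k + 1) + P (A (k + 1)) := by ring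
  have hB : P (⋂ k, A k) ≠ 0 :=
    measure_iInter_ne_zero_of_measure_diff_succ_le P (hft 0) hA_diff hδ_sum
  refine ⟨⋂ k, A k, .iInter hA_meas, hB, f, hfC, fun k ω hω => ?_⟩
  have hfk : 2 * (φ k : ℝ) ≤ f k ω := mem_iInter.1 hω k
  have hkφ : (k : ℝ) ≤ φ k := Nat.cast_le.2 (hφ.id_le k)
  linarith

lemma isArbitrageOfFirstKind_indicator (hC₀ : ∀ f ∈ C, 0 ≤ᵐ[P] f) {B : Set Ω}
    (hB : MeasurableSet B) (hPB : P B ≠ 0) {f : ℕ → Ω → ℝ} (hfC : ∀ k, f k ∈ C)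
    (hfB : ∀ k : ℕ, ∀ ω ∈ B, (k : ℝ) ≤ f k ω) :
    IsArbitrageOfFirstKind P C (B.indicator 1) := by
  refine ⟨measurable_one.indicator hB,
    .of_forall fun ω => indicator_nonneg (fun _ _ => zero_le_one) ω, ?_, fun x hx => ?_⟩
  · have hpos : {ω | 0 < B.indicator (1 : Ω → ℝ) ω} = B := by
      ext ω
      by_cases hω : ω ∈ B <;> simp [hω]
    rwa [hpos, pos_iff_ne_zero]
  · obtain ⟨k, hk⟩ := exists_nat_ge x⁻¹
    refine ⟨f k, hfC k, (hC₀ _ (hfC k)).mono fun ω hω => ?_⟩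
    by_cases hωB : ω ∈ B
    · rw [indicator_of_mem hωB, Pi.one_apply]
      calc 1 = x * x⁻¹ := (mul_inv_cancel₀ hx.ne').symm
        _ ≤ x * f k ω := by gcongr; exact hk.trans (hfB k ω hωB)
    · rw [indicator_of_notMem hωB]
      exact mul_nonneg hx.le hω

theorem not_exists_isArbitrageOfFirstKind_iff [IsFiniteMeasure P] (hC : Convex ℝ C)
    (hC_meas : ∀ f ∈ C, Measurable f) (hC₀ : ∀ f ∈ C, 0 ≤ᵐ[P] f) :
    (¬ ∃ ξ, IsArbitrageOfFirstKind P C ξ) ↔ BoundedInProbability P C := by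
  refine ⟨fun hNA => by_contra fun hbdd => ?_,
    fun hbdd ⟨ξ, hξ⟩ => hbdd.not_isArbitrageOfFirstKind ξ hξ⟩
  obtain ⟨B, hB, hPB, f, hfC, hfB⟩ := exists_measure_ne_zero_forall_le_of_iInf_tailSup_ne_zero hC
    hC_meas hC₀ (iInf_tailSup_ne_zero_of_not_boundedInProbability hbdd)
  exact hNA ⟨_, isArbitrageOfFirstKind_indicator hC₀ hB hPB hfC hfB⟩

end ArbitrageOfFirstKind

/-- For a convex set `C` of `P`-a.s. nonnegative random variables, there is no
arbitrage of the first kind relative to `C` if and only if `C` is bounded in probability. -/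
theorem no_arbitrage_of_first_kind_iff_bounded_in_probability
    {Ω : Type*} [MeasurableSpace Ω] (P : Measure Ω) [IsProbabilityMeasure P]
    (C : Set (Ω → ℝ))
    (hCmeas : ∀ f ∈ C, Measurable f)
    (hCnonneg : ∀ f ∈ C, ∀ᵐ ω ∂P, 0 ≤ f ω)
    (hCconv : ∀ f ∈ C, ∀ g ∈ C, ∀ t : ℝ, 0 ≤ t → t ≤ 1 →
      (fun ω => t * f ω + (1 - t) * g ω) ∈ C) :
    (¬ ∃ ξ : Ω → ℝ, Measurable ξ ∧ (∀ᵐ ω ∂P, 0 ≤ ξ ω) ∧ 0 < P {ω | 0 < ξ ω} ∧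
        ∀ x : ℝ, 0 < x → ∃ f ∈ C, ∀ᵐ ω ∂P, ξ ω ≤ x * f ω) ↔
      ∀ ε : ℝ, 0 < ε → ∃ M : ℝ, 0 < M ∧ ∀ f ∈ C, P {ω | M < f ω} ≤ ENNReal.ofReal ε := by
  have hC : Convex ℝ C := fun f hf g hg a b ha _ hab => by
    obtain rfl : b = 1 - a := by linarith
    exact hCconv f hf g hg a ha (by linarith)
  exact not_exists_isArbitrageOfFirstKind_iff hC hCmeas hCnonneg
end

section
/- Let Q be a finitely additive probability on F admitting a localizing sequence for Q. Then P is weakly absolutely continuous with respect to Q: for every A ∈ F, Q(A) = 0 implies P(A) = 0. -/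
open MeasureTheory Filter
open scoped NNReal

/-!
For `A ∈ F_T` with `Q A = 0`, the set `A ∩ {T ≤ τₙ}` lies in `F_T ∩ F_{τₙ}`, so by
monotonicity of `Q` it is `Q`-null, hence `νₙ`-null, hence `P`-null. Since `P {T ≤ τₙ} → 1`,
the remainder `A \ {T ≤ τₙ}` has `P`-measure tending to `0`. Finiteness of `νₙ`, needed to
read `νₙ`-nullness off the real value `Q = νₙ.toReal`, comes from `νₙ Ω = Q Ω = 1`.
-/

theorem MeasureTheory.IsStoppingTime.measurableSet_inter_le_of_measurableSet
    {Ω ι : Type*} {m : MeasurableSpace Ω} [LinearOrder ι] [TopologicalSpace ι]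
    [SecondCountableTopology ι] [OrderTopology ι]
    {f : Filtration ι m} {τ π : Ω → WithTop ι} (hτ : IsStoppingTime f τ) (hπ : IsStoppingTime f π)
    {s : Set Ω} (hs : MeasurableSet[hτ.measurableSpace] s) :
    MeasurableSet[hπ.measurableSpace] (s ∩ {ω | τ ω ≤ π ω}) :=
  ((hτ.measurableSet_min_iff hπ _).1 (hτ.measurableSet_inter_le hπ s hs)).2

theorem mono_of_nonneg_of_additive {Ω : Type*} {m : MeasurableSpace Ω} {Q : Set Ω → ℝ}
    (hQ_nonneg : ∀ A, MeasurableSet[m] A → 0 ≤ Q A)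
    (hQ_add : ∀ A B, MeasurableSet[m] A → MeasurableSet[m] B → Disjoint A B →
      Q (A ∪ B) = Q A + Q B)
    {A B : Set Ω} (hA : MeasurableSet[m] A) (hB : MeasurableSet[m] B) (hAB : A ⊆ B) :
    Q A ≤ Q B := by
  have hsplit : Q B = Q A + Q (B \ A) := by
    rw [← hQ_add A (B \ A) hA (hB.diff hA) Set.disjoint_sdiff_right, Set.union_sdiff_cancel hAB]
  linarith [hQ_nonneg _ (hB.diff hA)]

theorem MeasureTheory.measure_eq_zero_of_inter_null_of_tendsto_one {Ω ι : Type*}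
    {m : MeasurableSpace Ω} {μ : Measure Ω} [IsProbabilityMeasure μ] {l : Filter ι} [l.NeBot]
    {A : Set Ω} {B : ι → Set Ω} (hB : ∀ i, MeasurableSet (B i)) (hAB : ∀ i, μ (A ∩ B i) = 0)
    (hB_one : Tendsto (fun i => μ (B i)) l (nhds 1)) :
    μ A = 0 := by
  have hle : ∀ i, μ A ≤ 1 - μ (B i) := fun i => calc
    μ A ≤ μ (A ∩ B i) + μ (A \ B i) := measure_le_inter_add_sdiff μ A (B i)
    _ ≤ μ (B i)ᶜ := by rw [hAB i, zero_add]; exact measure_mono fun ω h => h.2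
    _ = 1 - μ (B i) := prob_compl_eq_one_sub (hB i)
  have hlim : Tendsto (fun i => 1 - μ (B i)) l (nhds 0) := by
    simpa using ENNReal.Tendsto.sub tendsto_const_nhds hB_one (Or.inl ENNReal.one_ne_top)
  exact le_antisymm (ge_of_tendsto' hlim hle) zero_le

theorem weakly_absolutely_continuous_of_localizing_general
    {Ω : Type*} {m : MeasurableSpace Ω} (P : Measure Ω) [IsProbabilityMeasure P]
    (ℱ : Filtration ℝ≥0 m)
    (T : Ω → ℝ≥0) (hT : IsStoppingTime ℱ (fun ω => (T ω : WithTop ℝ≥0)))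
    (Q : Set Ω → ℝ)
    (hQ01 : ∀ A : Set Ω, MeasurableSet[hT.measurableSpace] A → 0 ≤ Q A ∧ Q A ≤ 1)
    (hQuniv : Q Set.univ = 1)
    (hQadd : ∀ A B : Set Ω, MeasurableSet[hT.measurableSpace] A →
      MeasurableSet[hT.measurableSpace] B → Disjoint A B → Q (A ∪ B) = Q A + Q B)
    -- a localizing sequence for Q:
    (τ : ℕ → Ω → ℝ≥0) (hτ : ∀ n, IsStoppingTime ℱ (fun ω => (τ n ω : WithTop ℝ≥0)))
    (hτT : Tendsto (fun n => P {ω | T ω ≤ τ n ω}) atTop (nhds 1))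
    (ν : ∀ n : ℕ, @Measure Ω ((hτ n).measurableSpace))
    (hνQ : ∀ n, ∀ A : Set Ω, MeasurableSet[(hτ n).measurableSpace] A → Q A = (ν n A).toReal)
    (hνP : ∀ n, ∀ A : Set Ω, MeasurableSet[(hτ n).measurableSpace] A → (ν n A = 0 ↔ P A = 0)) :
    ∀ A : Set Ω, MeasurableSet[hT.measurableSpace] A → Q A = 0 → P A = 0 := by
  intro A hA hQA
  have hQ_nonneg s hs := (hQ01 s hs).1
  set B : ℕ → Set Ω := fun n => {ω | (T ω : WithTop ℝ≥0) ≤ τ n ω}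
  have hABτ n : MeasurableSet[(hτ n).measurableSpace] (A ∩ B n) :=
    hT.measurableSet_inter_le_of_measurableSet (hτ n) hA
  have hQAB n : Q (A ∩ B n) = 0 := by
    have hABT := hA.inter (hT.measurableSet_le_stopping_time (hτ n))
    exact le_antisymm
      (hQA ▸ mono_of_nonneg_of_additive hQ_nonneg hQadd hABT hA Set.inter_subset_left)
      (hQ_nonneg _ hABT)
  have hν_finite n : IsFiniteMeasure (ν n) := by
    have h := hνQ n Set.univ MeasurableSet.univ
    rw [hQuniv] at h
    exact ⟨lt_top_iff_ne_top.2 fun htop => by simp [htop] at h⟩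
  have hPAB n : P (A ∩ B n) = 0 := by
    refine (hνP n _ (hABτ n)).1 ((measureReal_eq_zero_iff).1 ?_)
    rw [Measure.real, ← hνQ n _ (hABτ n), hQAB n]
  exact measure_eq_zero_of_inter_null_of_tendsto_one
    (fun n => (hτ n).measurableSpace_le _ (hT.measurableSet_stopping_time_le (hτ n))) hPAB
    (by simpa only [B, WithTop.coe_le_coe] using hτT)

/-- If `Q` is a finitely additive probability on `F = F_T` admitting a localizing
sequence for `Q`, then `P` is weakly absolutely continuous with respect to `Q`: for every
`A ∈ F`, `Q A = 0` implies `P A = 0`. -/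
theorem weakly_absolutely_continuous_of_localizing
    {Ω : Type*} {m : MeasurableSpace Ω} (P : Measure Ω) [IsProbabilityMeasure P]
    (ℱ : Filtration ℝ≥0 m)
    (T : Ω → ℝ≥0) (hT : IsStoppingTime ℱ (fun ω => (T ω : WithTop ℝ≥0)))
    (Q : Set Ω → ℝ)
    (hQ01 : ∀ A : Set Ω, MeasurableSet[hT.measurableSpace] A → 0 ≤ Q A ∧ Q A ≤ 1)
    (hQempty : Q ∅ = 0) (hQuniv : Q Set.univ = 1)
    (hQadd : ∀ A B : Set Ω, MeasurableSet[hT.measurableSpace] A →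
      MeasurableSet[hT.measurableSpace] B → Disjoint A B → Q (A ∪ B) = Q A + Q B)
    -- a localizing sequence for Q:
    (τ : ℕ → Ω → ℝ≥0) (hτ : ∀ n, IsStoppingTime ℱ (fun ω => (τ n ω : WithTop ℝ≥0)))
    (hτmono : ∀ n, τ n ≤ τ (n + 1))
    (hτT : Tendsto (fun n => P {ω | T ω ≤ τ n ω}) atTop (nhds 1))
    (ν : ∀ n : ℕ, @Measure Ω ((hτ n).measurableSpace))
    (hνQ : ∀ n, ∀ A : Set Ω, MeasurableSet[(hτ n).measurableSpace] A → Q A = (ν n A).toReal)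
    (hνP : ∀ n, ∀ A : Set Ω, MeasurableSet[(hτ n).measurableSpace] A → (ν n A = 0 ↔ P A = 0)) :
    ∀ A : Set Ω, MeasurableSet[hT.measurableSpace] A → Q A = 0 → P A = 0 :=
  weakly_absolutely_continuous_of_localizing_general P ℱ T hT Q hQ01 hQuniv hQadd τ hτ hτT ν hνQ hνP
end

section
/- Let Q be a finitely additive probability on F admitting a localizing sequence for Q. Then P is strongly absolutely continuous with respect to Q: for every ε > 0 there exists δ > 0 such that every E ∈ F with Q(E) < δ satisfies P(E) < ε. -/
/-!
Fix `ε`. Since `P(T ≤ τₙ) → 1`, some `n` has `P(T > τₙ) < ε/2`. On `F_{τₙ}` the finite measure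
`P` is absolutely continuous with respect to the finite measure `νₙ`, hence uniformly so: there
is `δ > 0` with `νₙ(A) < δ ⇒ P(A) < ε/2`. For `E ∈ F_T`, the set `E ∩ {T ≤ τₙ}` lies in both
`F_T` and `F_{τₙ}`, so `νₙ(E ∩ {T ≤ τₙ}) = Q(E ∩ {T ≤ τₙ}) ≤ Q(E)` by monotonicity of `Q`.
Thus `Q(E) < δ` gives `P(E) ≤ P(E ∩ {T ≤ τₙ}) + P(T > τₙ) < ε`.
-/

open MeasureTheory Filter
open scoped NNReal ENNReal

namespace MeasureTheory

variable {Ω : Type*}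

lemma le_of_subset_of_additive {m : MeasurableSpace Ω} {Q : Set Ω → ℝ}
    (hQ_nonneg : ∀ A, MeasurableSet A → 0 ≤ Q A)
    (hQ_add : ∀ A B, MeasurableSet A → MeasurableSet B → Disjoint A B →
      Q (A ∪ B) = Q A + Q B)
    {A E : Set Ω} (hA : MeasurableSet A) (hE : MeasurableSet E) (hAE : A ⊆ E) :
    Q A ≤ Q E := by
  have hdiff : MeasurableSet (E \ A) := hE.diff hA
  have hsplit := hQ_add A (E \ A) hA hdiff disjoint_sdiff_self_right
  rw [Set.union_sdiff_cancel hAE] at hsplit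
  linarith [hQ_nonneg _ hdiff]

lemma tendsto_prob_compl_of_tendsto_one {m : MeasurableSpace Ω} {P : Measure Ω}
    [IsProbabilityMeasure P] {ι : Type*} {l : Filter ι} {s : ι → Set Ω}
    (hs : ∀ i, MeasurableSet (s i)) (h : Tendsto (fun i => P (s i)) l (nhds 1)) :
    Tendsto (fun i => P (s i)ᶜ) l (nhds 0) := by
  simp_rw [prob_compl_eq_one_sub (hs _)]
  exact (ENNReal.tendsto_const_sub_nhds_zero_iff ENNReal.one_ne_top fun _ => prob_le_one).2 h

lemma exists_pos_measure_lt_of_absolutelyContinuous {m : MeasurableSpace Ω} {μ ν : Measure Ω}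
    [IsFiniteMeasure μ] [SigmaFinite ν] (hμν : μ ≪ ν) {ε : ℝ≥0∞} (hε : ε ≠ 0) :
    ∃ δ : ℝ≥0, 0 < δ ∧ ∀ A, MeasurableSet A → ν A < δ → μ A < ε := by
  obtain ⟨δ', hδ', hδ'_small⟩ :=
    exists_pos_setLIntegral_lt_of_measure_lt (Measure.lintegral_rnDeriv_lt_top μ ν).ne hε
  obtain ⟨δ, hδ, hδδ'⟩ := ENNReal.lt_iff_exists_nnreal_btwn.1 hδ'
  refine ⟨δ, ENNReal.coe_pos.1 hδ, fun A hA hνA => ?_⟩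
  rw [← Measure.setLIntegral_rnDeriv' hμν hA]
  exact hδ'_small A (hνA.trans hδδ')

lemma exists_pos_measure_lt_of_trim {m m' : MeasurableSpace Ω} (hm : m' ≤ m) {P : Measure[m] Ω}
    [IsFiniteMeasure P] {ν : Measure[m'] Ω} [SigmaFinite ν]
    (hPν : ∀ A, MeasurableSet[m'] A → ν A = 0 → P A = 0) {ε : ℝ≥0∞} (hε : ε ≠ 0) :
    ∃ δ : ℝ≥0, 0 < δ ∧ ∀ A, MeasurableSet[m'] A → ν A < δ → P A < ε := by
  have := isFiniteMeasure_trim (μ := P) hm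
  have hac : P.trim hm ≪ ν := Measure.AbsolutelyContinuous.mk fun A hA hνA => by
    rw [trim_measurableSet_eq hm hA]
    exact hPν A hA hνA
  obtain ⟨δ, hδ, hsmall⟩ := exists_pos_measure_lt_of_absolutelyContinuous hac hε
  refine ⟨δ, hδ, fun A hA hνA => ?_⟩
  rw [← trim_measurableSet_eq hm hA]
  exact hsmall A hA hνA

end MeasureTheory

theorem strongly_absolutely_continuous_of_localizing_general
    {Ω : Type*} {m : MeasurableSpace Ω} (P : Measure Ω) [IsProbabilityMeasure P]
    (ℱ : Filtration ℝ≥0 m)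
    (T : Ω → ℝ≥0) (hT : IsStoppingTime ℱ (fun ω => (T ω : WithTop ℝ≥0)))
    (Q : Set Ω → ℝ)
    (hQ01 : ∀ A : Set Ω, MeasurableSet[hT.measurableSpace] A → 0 ≤ Q A ∧ Q A ≤ 1)
    (hQuniv : Q Set.univ = 1)
    (hQadd : ∀ A B : Set Ω, MeasurableSet[hT.measurableSpace] A →
      MeasurableSet[hT.measurableSpace] B → Disjoint A B → Q (A ∪ B) = Q A + Q B)
    -- a localizing sequence for Q:
    (τ : ℕ → Ω → ℝ≥0) (hτ : ∀ n, IsStoppingTime ℱ (fun ω => (τ n ω : WithTop ℝ≥0)))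
    (hτT : Tendsto (fun n => P {ω | T ω ≤ τ n ω}) atTop (nhds 1))
    (ν : ∀ n : ℕ, @Measure Ω ((hτ n).measurableSpace))
    (hνQ : ∀ n, ∀ A : Set Ω, MeasurableSet[(hτ n).measurableSpace] A → Q A = (ν n A).toReal)
    (hνP : ∀ n, ∀ A : Set Ω, MeasurableSet[(hτ n).measurableSpace] A → (ν n A = 0 ↔ P A = 0)) :
    ∀ ε : ℝ, 0 < ε → ∃ δ : ℝ, 0 < δ ∧
      ∀ E : Set Ω, MeasurableSet[hT.measurableSpace] E → Q E < δ → P E < ENNReal.ofReal ε := by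
  intro ε hε
  have hε2 : ENNReal.ofReal ε / 2 ≠ 0 := (ENNReal.half_pos (ENNReal.ofReal_pos.2 hε).ne').ne'
  set S : ℕ → Set Ω := fun n => {ω | (T ω : WithTop ℝ≥0) ≤ τ n ω}
  have hS : ∀ n, MeasurableSet (S n) :=
    fun n => hT.measurableSpace_le _ (hT.measurableSet_le_stopping_time (hτ n))
  have hτS : Tendsto (fun n => P (S n)) atTop (nhds 1) := by
    simpa only [S, WithTop.coe_le_coe] using hτT
  obtain ⟨n, hn⟩ : ∃ n, P (S n)ᶜ < ENNReal.ofReal ε / 2 :=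
    ((tendsto_prob_compl_of_tendsto_one hS hτS).eventually
      (gt_mem_nhds (pos_iff_ne_zero.2 hε2))).exists
  have : IsFiniteMeasure (ν n) := ⟨lt_top_iff_ne_top.2 fun htop => by
    simpa [hQuniv, htop] using hνQ n Set.univ MeasurableSet.univ⟩
  obtain ⟨δ, hδ, hPν⟩ :=
    exists_pos_measure_lt_of_trim (hτ n).measurableSpace_le (fun A hA => (hνP n A hA).1) hε2
  refine ⟨δ, hδ, fun E hE hQE => ?_⟩
  obtain ⟨hET, hEn⟩ :=
    (hT.measurableSet_min_iff (hτ n) _).1 (hT.measurableSet_inter_le (hτ n) E hE)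
  have hQES : Q (E ∩ S n) < δ :=
    (le_of_subset_of_additive (fun A hA => (hQ01 A hA).1) hQadd hET hE
      Set.inter_subset_left).trans_lt hQE
  have hνES : ν n (E ∩ S n) < δ := by
    rw [hνQ n _ hEn] at hQES
    exact (ENNReal.toReal_lt_toReal (measure_ne_top _ _) ENNReal.coe_ne_top).1 hQES
  calc P E ≤ P (E ∩ S n) + P (E \ S n) := measure_le_inter_add_sdiff _ _ _
    _ < ENNReal.ofReal ε / 2 + ENNReal.ofReal ε / 2 :=
        ENNReal.add_lt_add (hPν _ hEn hνES)
          ((measure_mono (Set.sdiff_subset_compl _ _)).trans_lt hn)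
    _ = ENNReal.ofReal ε := ENNReal.add_halves _

/-- If `Q` is a finitely additive probability on `F = F_T` admitting a localizing
sequence for `Q`, then `P` is strongly absolutely continuous with respect to `Q`: for every
`ε > 0` there exists `δ > 0` such that every `E ∈ F` with `Q E < δ` satisfies `P E < ε`. -/
theorem strongly_absolutely_continuous_of_localizing
    {Ω : Type*} {m : MeasurableSpace Ω} (P : Measure Ω) [IsProbabilityMeasure P]
    (ℱ : Filtration ℝ≥0 m)
    (T : Ω → ℝ≥0) (hT : IsStoppingTime ℱ (fun ω => (T ω : WithTop ℝ≥0)))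
    (Q : Set Ω → ℝ)
    (hQ01 : ∀ A : Set Ω, MeasurableSet[hT.measurableSpace] A → 0 ≤ Q A ∧ Q A ≤ 1)
    (hQempty : Q ∅ = 0) (hQuniv : Q Set.univ = 1)
    (hQadd : ∀ A B : Set Ω, MeasurableSet[hT.measurableSpace] A →
      MeasurableSet[hT.measurableSpace] B → Disjoint A B → Q (A ∪ B) = Q A + Q B)
    -- a localizing sequence for Q:
    (τ : ℕ → Ω → ℝ≥0) (hτ : ∀ n, IsStoppingTime ℱ (fun ω => (τ n ω : WithTop ℝ≥0)))
    (hτmono : ∀ n, τ n ≤ τ (n + 1))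
    (hτT : Tendsto (fun n => P {ω | T ω ≤ τ n ω}) atTop (nhds 1))
    (ν : ∀ n : ℕ, @Measure Ω ((hτ n).measurableSpace))
    (hνQ : ∀ n, ∀ A : Set Ω, MeasurableSet[(hτ n).measurableSpace] A → Q A = (ν n A).toReal)
    (hνP : ∀ n, ∀ A : Set Ω, MeasurableSet[(hτ n).measurableSpace] A → (ν n A = 0 ↔ P A = 0)) :
    ∀ ε : ℝ, 0 < ε → ∃ δ : ℝ, 0 < δ ∧
      ∀ E : Set Ω, MeasurableSet[hT.measurableSpace] E → Q E < δ → P E < ENNReal.ofReal ε :=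
  strongly_absolutely_continuous_of_localizing_general P ℱ T hT Q hQ01 hQuniv hQadd τ hτ hτT ν hνQ
    hνP
end

section
/- Let Q be a local probability weakly equivalent to P. The following are equivalent: (1) Q is countably additive, i.e., Q(⋃_k A_k) = Σ_k Q(A_k) for every sequence (A_k) of pairwise disjoint sets in F; (2) Q is strongly absolutely continuous with respect to P; (3) lim_{n→∞} Q(τ_n ≥ T) = 1 holds for every localizing sequence (τ_n) for Q; (4) lim_{n→∞} Q(τ_n ≥ T) = 1 holds for some localizing sequence (τ_n) for Q. -/
/-!
Condition (1) makes `Q` a measure on `F_T` vanishing on `P`-null sets, so continuity from below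
along `{T ≤ τ n} ↑`, whose union has full `P`-measure, gives (3). For (4) ⇒ (2), pick `n` with
`Q (T ≤ τ n) > 1 - ε / 2`: on `F_{τ n}` the set function `Q` is a finite measure absolutely
continuous with respect to `P`, hence `ε`-`δ` continuous, and the part of `E` outside
`{T ≤ τ n}` has `Q`-mass below `ε / 2`. Finally (2) gives continuity of `Q` at `∅` along
decreasing sequences, which for a finitely additive set function is σ-additivity.
-/

open MeasureTheory Filter
open scoped NNReal

/-- A nondecreasing sequence of stopping times `τ` with `P (τ n ≥ T) → 1` which is
localizing for the finitely additive probability `Q`: on each `F_{τ n}` there is a countably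
additive measure agreeing with `Q` and mutually absolutely continuous with (the restriction
of) `P`. -/
def IsLocalizingSeqFor {Ω : Type*} {m : MeasurableSpace Ω} (P : Measure Ω)
    (ℱ : Filtration ℝ≥0 m) (T : Ω → ℝ≥0) (Q : Set Ω → ℝ) (τ : ℕ → Ω → ℝ≥0) : Prop :=
  (∀ n, τ n ≤ τ (n + 1)) ∧ (∀ n, IsStoppingTime ℱ (fun ω => (τ n ω : WithTop ℝ≥0))) ∧
    Tendsto (fun n => P {ω | T ω ≤ τ n ω}) atTop (nhds 1) ∧
    ∀ n, ∀ hn : IsStoppingTime ℱ (fun ω => (τ n ω : WithTop ℝ≥0)),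
      ∃ ν : @Measure Ω hn.measurableSpace,
        (∀ A : Set Ω, MeasurableSet[hn.measurableSpace] A → Q A = (ν A).toReal) ∧
        (∀ A : Set Ω, MeasurableSet[hn.measurableSpace] A → (ν A = 0 ↔ P A = 0))

open Set
open scoped ENNReal Topology

theorem exists_pos_forall_measure_lt_of_absolutelyContinuous {α : Type*} {m : MeasurableSpace α}
    {μ ν : Measure α} [SigmaFinite μ] [IsFiniteMeasure ν] (hνμ : ν ≪ μ) {ε : ℝ≥0∞}
    (hε : ε ≠ 0) : ∃ δ : ℝ, 0 < δ ∧ ∀ s, μ s < ENNReal.ofReal δ → ν s < ε := by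
  obtain ⟨η, hη, hμν⟩ := exists_pos_setLIntegral_lt_of_measure_lt (μ := μ)
    (Measure.lintegral_rnDeriv_le.trans_lt (measure_lt_top ν univ)).ne hε
  obtain ⟨δ, -, hδ, hδη⟩ := ENNReal.lt_iff_exists_real_btwn.mp hη
  refine ⟨δ, ENNReal.ofReal_pos.mp hδ, fun s hs => ?_⟩
  rw [← Measure.setLIntegral_rnDeriv hνμ s]
  exact hμν s (hs.trans hδη)

section SetFunction

variable {Ω : Type*}

def IsFinitelyAdditive (m : MeasurableSpace Ω) (Q : Set Ω → ℝ) : Prop :=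
  ∀ A B : Set Ω, MeasurableSet[m] A → MeasurableSet[m] B → Disjoint A B → Q (A ∪ B) = Q A + Q B

def IsCountablyAdditive (m : MeasurableSpace Ω) (Q : Set Ω → ℝ) : Prop :=
  ∀ A : ℕ → Set Ω, (∀ k, MeasurableSet[m] (A k)) → Pairwise (Function.onFun Disjoint A) →
    HasSum (fun k => Q (A k)) (Q (⋃ k, A k))

def IsStronglyAbsContinuous (m : MeasurableSpace Ω) (Q : Set Ω → ℝ) {m0 : MeasurableSpace Ω}
    (μ : Measure[m0] Ω) : Prop :=
  ∀ ε : ℝ, 0 < ε → ∃ δ : ℝ, 0 < δ ∧ ∀ E : Set Ω,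
    MeasurableSet[m] E → μ E < ENNReal.ofReal δ → Q E < ε

variable {m : MeasurableSpace Ω} {Q : Set Ω → ℝ} {A B : Set Ω}

namespace IsFinitelyAdditive

theorem apply_empty (hQ : IsFinitelyAdditive m Q) : Q ∅ = 0 := by
  have h := hQ ∅ ∅ .empty .empty (disjoint_empty ∅)
  rw [empty_union] at h
  linarith

theorem apply_inter_add_apply_diff (hQ : IsFinitelyAdditive m Q) (hA : MeasurableSet A)
    (hB : MeasurableSet B) : Q (A ∩ B) + Q (A \ B) = Q A := by
  rw [← hQ _ _ (hA.inter hB) (hA.diff hB) disjoint_sdiff_inter.symm, inter_union_sdiff]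

theorem apply_compl (hQ : IsFinitelyAdditive m Q) (hA : MeasurableSet A) :
    Q Aᶜ = Q univ - Q A := by
  have h := hQ.apply_inter_add_apply_diff MeasurableSet.univ hA
  rw [univ_inter, ← compl_eq_univ_sdiff] at h
  linarith

theorem mono (hQ : IsFinitelyAdditive m Q) (hQ0 : ∀ A, MeasurableSet A → 0 ≤ Q A)
    (hA : MeasurableSet A) (hB : MeasurableSet B) (hAB : A ⊆ B) : Q A ≤ Q B := by
  rw [← hQ.apply_inter_add_apply_diff hB hA, inter_eq_right.mpr hAB]
  linarith [hQ0 _ (hB.diff hA)]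

theorem apply_biUnion_range (hQ : IsFinitelyAdditive m Q) {A : ℕ → Set Ω}
    (hA : ∀ k, MeasurableSet (A k)) (hAd : Pairwise (Function.onFun Disjoint A)) (n : ℕ) :
    Q (⋃ k ∈ Finset.range n, A k) = ∑ k ∈ Finset.range n, Q (A k) := by
  induction n with
  | zero => simpa using hQ.apply_empty
  | succ n ih =>
    have hdisj : Disjoint (A n) (⋃ k ∈ Finset.range n, A k) :=
      disjoint_iUnion₂_right.mpr fun k hk => hAd (Finset.mem_range.mp hk).ne'
    rw [Finset.range_add_one, Finset.set_biUnion_insert, Finset.sum_insert Finset.notMem_range_self,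
      hQ _ _ (hA n) (Finset.measurableSet_biUnion _ fun k _ => hA k) hdisj, ih]

theorem tendsto_apply_of_monotone (hQ : IsFinitelyAdditive m Q) (hσ : IsCountablyAdditive m Q)
    {B : ℕ → Set Ω} (hB : ∀ n, MeasurableSet (B n)) (hBmono : Monotone B) :
    Tendsto (fun n => Q (B n)) atTop (𝓝 (Q (⋃ n, B n))) := by
  have hsum := hσ (disjointed B) (MeasurableSet.disjointed hB) (disjoint_disjointed B)
  rw [iUnion_disjointed] at hsum
  have hpartial (n : ℕ) : ∑ k ∈ Finset.range (n + 1), Q (disjointed B k) = Q (B n) := by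
    rw [← hQ.apply_biUnion_range (MeasurableSet.disjointed hB) (disjoint_disjointed B),
      biUnion_range_succ_disjointed, hBmono.partialSups_eq]
  exact (hsum.tendsto_sum_nat.comp (tendsto_add_atTop_nat 1)).congr hpartial

theorem isCountablyAdditive_of_tendsto_zero (hQ : IsFinitelyAdditive m Q)
    (hQ0 : ∀ A, MeasurableSet A → 0 ≤ Q A)
    (hcont : ∀ R : ℕ → Set Ω, (∀ n, MeasurableSet (R n)) → Antitone R → ⋂ n, R n = ∅ →
      Tendsto (fun n => Q (R n)) atTop (𝓝 0)) :
    IsCountablyAdditive m Q := by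
  intro A hA hAd
  set U := ⋃ k, A k
  set S : ℕ → Set Ω := fun n => ⋃ k ∈ Finset.range n, A k
  have hU : MeasurableSet U := .iUnion hA
  have hS (n : ℕ) : MeasurableSet (S n) := Finset.measurableSet_biUnion _ fun k _ => hA k
  have hSU (n : ℕ) : S n ⊆ U := iUnion₂_subset fun k _ => subset_iUnion A k
  have hS_mono : Monotone S := fun i j hij =>
    biUnion_subset_biUnion_left (Finset.coe_subset.mpr (Finset.range_subset_range.mpr hij))
  have htail_empty : ⋂ n, U \ S n = ∅ := by
    refine eq_empty_of_forall_notMem fun ω hω => ?_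
    obtain ⟨k, hk⟩ := mem_iUnion.mp (mem_iInter.mp hω 0).1
    exact (mem_iInter.mp hω (k + 1)).2 (mem_biUnion (Finset.self_mem_range_succ k) hk)
  have htail := hcont _ (fun n => hU.diff (hS n)) (fun i j hij => sdiff_subset_sdiff_right
    (hS_mono hij)) htail_empty
  have hpartial (n : ℕ) : ∑ k ∈ Finset.range n, Q (A k) = Q U - Q (U \ S n) := by
    rw [← hQ.apply_biUnion_range hA hAd, ← hQ.apply_inter_add_apply_diff hU (hS n),
      inter_eq_right.mpr (hSU n)]
    ring
  refine (hasSum_iff_tendsto_nat_of_nonneg (fun k => hQ0 _ (hA k)) _).mpr ?_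
  simpa [hpartial] using tendsto_const_nhds.sub htail

end IsFinitelyAdditive

theorem IsStronglyAbsContinuous.tendsto_zero {m0 : MeasurableSpace Ω} (hm : m ≤ m0)
    {μ : Measure[m0] Ω} [IsFiniteMeasure μ] (hQμ : IsStronglyAbsContinuous m Q μ)
    (hQ0 : ∀ A, MeasurableSet[m] A → 0 ≤ Q A) {R : ℕ → Set Ω} (hR : ∀ n, MeasurableSet[m] (R n))
    (hR_anti : Antitone R) (hR_empty : ⋂ n, R n = ∅) :
    Tendsto (fun n => Q (R n)) atTop (𝓝 0) := by
  have hμR : Tendsto (μ ∘ R) atTop (𝓝 0) := by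
    simpa only [hR_empty, measure_empty] using tendsto_measure_iInter_atTop (μ := μ)
      (fun n => (hm _ (hR n)).nullMeasurableSet) hR_anti ⟨0, measure_ne_top μ _⟩
  refine tendsto_order.mpr ⟨fun a ha => .of_forall fun n => ha.trans_le (hQ0 _ (hR n)),
    fun ε hε => ?_⟩
  obtain ⟨δ, hδ, hQδ⟩ := hQμ ε hε
  filter_upwards [hμR.eventually_lt_const (ENNReal.ofReal_pos.mpr hδ)] with n hn
  exact hQδ _ (hR n) hn

end SetFunction

section StoppingTime

variable {Ω : Type*} {m : MeasurableSpace Ω} {ℱ : Filtration ℝ≥0 m} {T σ : Ω → ℝ≥0}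

theorem measurableSet_setOf_le_of_isStoppingTime
    (hT : IsStoppingTime ℱ (fun ω => (T ω : WithTop ℝ≥0)))
    (hσ : IsStoppingTime ℱ (fun ω => (σ ω : WithTop ℝ≥0))) :
    MeasurableSet[hT.measurableSpace] {ω | T ω ≤ σ ω} := by
  simpa only [WithTop.coe_le_coe] using hT.measurableSet_le_stopping_time hσ

theorem measurableSet_inter_setOf_le_of_isStoppingTime
    (hT : IsStoppingTime ℱ (fun ω => (T ω : WithTop ℝ≥0)))
    (hσ : IsStoppingTime ℱ (fun ω => (σ ω : WithTop ℝ≥0))) {E : Set Ω}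
    (hE : MeasurableSet[hT.measurableSpace] E) :
    MeasurableSet[hσ.measurableSpace] (E ∩ {ω | T ω ≤ σ ω}) := by
  refine (hT.min hσ).measurableSpace_mono hσ (fun ω => min_le_right _ _) _ ?_
  simpa only [WithTop.coe_le_coe] using hT.measurableSet_inter_le hσ E hE

end StoppingTime

namespace IsLocalizingSeqFor

variable {Ω : Type*} {m : MeasurableSpace Ω} {P : Measure Ω} {ℱ : Filtration ℝ≥0 m}
  {T : Ω → ℝ≥0} {Q : Set Ω → ℝ} {τ : ℕ → Ω → ℝ≥0}

theorem isStoppingTime (hτ : IsLocalizingSeqFor P ℱ T Q τ) (n : ℕ) :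
    IsStoppingTime ℱ (fun ω => (τ n ω : WithTop ℝ≥0)) :=
  hτ.2.1 n

theorem monotone_setOf_le (hτ : IsLocalizingSeqFor P ℱ T Q τ) :
    Monotone fun n => {ω | T ω ≤ τ n ω} :=
  monotone_nat_of_le_succ fun n _ hω => le_trans hω (hτ.1 n _)

theorem measure_compl_iUnion_setOf_le [IsProbabilityMeasure P]
    (hτ : IsLocalizingSeqFor P ℱ T Q τ) (hT : IsStoppingTime ℱ (fun ω => (T ω : WithTop ℝ≥0))) :
    P (⋃ n, {ω | T ω ≤ τ n ω})ᶜ = 0 := by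
  have hU : MeasurableSet (⋃ n, {ω | T ω ≤ τ n ω}) := hT.measurableSpace_le _
    (.iUnion fun n => measurableSet_setOf_le_of_isStoppingTime hT (hτ.isStoppingTime n))
  rw [prob_compl_eq_zero_iff hU]
  exact tendsto_nhds_unique (tendsto_measure_iUnion_atTop hτ.monotone_setOf_le) hτ.2.2.1

theorem tendsto_of_isCountablyAdditive [IsProbabilityMeasure P]
    (hτ : IsLocalizingSeqFor P ℱ T Q τ) (hT : IsStoppingTime ℱ (fun ω => (T ω : WithTop ℝ≥0)))
    (hQ : IsFinitelyAdditive hT.measurableSpace Q) (hσ : IsCountablyAdditive hT.measurableSpace Q)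
    (hQuniv : Q univ = 1)
    (hQP : ∀ A, MeasurableSet[hT.measurableSpace] A → P A = 0 → Q A = 0) :
    Tendsto (fun n => Q {ω | T ω ≤ τ n ω}) atTop (𝓝 1) := by
  have hB (n : ℕ) := measurableSet_setOf_le_of_isStoppingTime hT (hτ.isStoppingTime n)
  have hU := MeasurableSet.iUnion hB
  have hQU : Q (⋃ n, {ω | T ω ≤ τ n ω}) = 1 := by
    have h := hQ.apply_compl hU
    rw [hQP _ hU.compl (hτ.measure_compl_iUnion_setOf_le hT), hQuniv] at h
    linarith
  simpa only [hQU] using hQ.tendsto_apply_of_monotone hσ hB hτ.monotone_setOf_le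

theorem isStronglyAbsContinuous [IsFiniteMeasure P] (hτ : IsLocalizingSeqFor P ℱ T Q τ) (hQuniv : Q univ = 1)
    (n : ℕ) : IsStronglyAbsContinuous (hτ.isStoppingTime n).measurableSpace Q P := by
  intro ε hε
  obtain ⟨ν, hQν, hνP⟩ := hτ.2.2.2 n (hτ.isStoppingTime n)
  have hle := (hτ.isStoppingTime n).measurableSpace_le
  have : IsFiniteMeasure ν := by
    refine ⟨lt_top_iff_ne_top.mpr fun h => ?_⟩
    simpa [h] using (hQν univ .univ).symm.trans hQuniv
  have hνP' : ν ≪ P.trim hle := .mk fun A hA hPA =>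
    (hνP A hA).mpr (by rwa [trim_measurableSet_eq hle hA] at hPA)
  obtain ⟨δ, hδ, hνδ⟩ := exists_pos_forall_measure_lt_of_absolutelyContinuous hνP'
    (ENNReal.ofReal_pos.mpr hε).ne'
  refine ⟨δ, hδ, fun E hE hPE => ?_⟩
  rw [hQν E hE]
  exact ENNReal.toReal_lt_of_lt_ofReal (hνδ E (by rwa [trim_measurableSet_eq hle hE]))

theorem isStronglyAbsContinuous_of_tendsto [IsFiniteMeasure P] (hτ : IsLocalizingSeqFor P ℱ T Q τ)
    (hT : IsStoppingTime ℱ (fun ω => (T ω : WithTop ℝ≥0)))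
    (hQ : IsFinitelyAdditive hT.measurableSpace Q)
    (hQ0 : ∀ A, MeasurableSet[hT.measurableSpace] A → 0 ≤ Q A) (hQuniv : Q univ = 1)
    (hQτ : Tendsto (fun n => Q {ω | T ω ≤ τ n ω}) atTop (𝓝 1)) :
    IsStronglyAbsContinuous hT.measurableSpace Q P := by
  intro ε hε
  obtain ⟨n, hn⟩ := (hQτ.eventually (eventually_gt_nhds (by linarith : 1 - ε / 2 < 1))).exists
  obtain ⟨δ, hδ, hQδ⟩ := hτ.isStronglyAbsContinuous hQuniv n (ε / 2) (half_pos hε)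
  refine ⟨δ, hδ, fun E hE hPE => ?_⟩
  have hB := measurableSet_setOf_le_of_isStoppingTime hT (hτ.isStoppingTime n)
  have hinter : Q (E ∩ {ω | T ω ≤ τ n ω}) < ε / 2 :=
    hQδ _ (measurableSet_inter_setOf_le_of_isStoppingTime hT _ hE)
      ((measure_mono inter_subset_left).trans_lt hPE)
  have hdiff := hQ.mono hQ0 (hE.diff hB) hB.compl (sdiff_subset_compl _ _)
  rw [hQ.apply_compl hB, hQuniv] at hdiff
  rw [← hQ.apply_inter_add_apply_diff hE hB]
  linarith

end IsLocalizingSeqFor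

theorem countably_additive_tfae_general
    {Ω : Type*} {m : MeasurableSpace Ω} (P : Measure Ω) [IsProbabilityMeasure P]
    (ℱ : Filtration ℝ≥0 m)
    (T : Ω → ℝ≥0) (hT : IsStoppingTime ℱ (fun ω => (T ω : WithTop ℝ≥0)))
    (Q : Set Ω → ℝ)
    (hQ01 : ∀ A : Set Ω, MeasurableSet[hT.measurableSpace] A → 0 ≤ Q A ∧ Q A ≤ 1)
    (hQuniv : Q Set.univ = 1)
    (hQadd : ∀ A B : Set Ω, MeasurableSet[hT.measurableSpace] A →
      MeasurableSet[hT.measurableSpace] B → Disjoint A B → Q (A ∪ B) = Q A + Q B)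
    (hQweak : ∀ A : Set Ω, MeasurableSet[hT.measurableSpace] A → P A = 0 → Q A = 0)
    (hQloc : ∃ τ : ℕ → Ω → ℝ≥0, IsLocalizingSeqFor P ℱ T Q τ) :
    List.TFAE
      [∀ A : ℕ → Set Ω, (∀ k, MeasurableSet[hT.measurableSpace] (A k)) →
          Pairwise (Function.onFun Disjoint A) →
          HasSum (fun k => Q (A k)) (Q (⋃ k, A k)),
        ∀ ε : ℝ, 0 < ε → ∃ δ : ℝ, 0 < δ ∧ ∀ E : Set Ω,
          MeasurableSet[hT.measurableSpace] E → P E < ENNReal.ofReal δ → Q E < ε,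
        ∀ τ : ℕ → Ω → ℝ≥0, IsLocalizingSeqFor P ℱ T Q τ →
          Tendsto (fun n => Q {ω | T ω ≤ τ n ω}) atTop (nhds 1),
        ∃ τ : ℕ → Ω → ℝ≥0, IsLocalizingSeqFor P ℱ T Q τ ∧
          Tendsto (fun n => Q {ω | T ω ≤ τ n ω}) atTop (nhds 1)] := by
  have hQ : IsFinitelyAdditive hT.measurableSpace Q := hQadd
  have hQ0 (A : Set Ω) (hA : MeasurableSet[hT.measurableSpace] A) : 0 ≤ Q A := (hQ01 A hA).1
  tfae_have 1 → 3 := fun hσ τ hτ => hτ.tendsto_of_isCountablyAdditive hT hQ hσ hQuniv hQweak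
  tfae_have 3 → 4 := fun h3 => hQloc.imp fun τ hτ => ⟨hτ, h3 τ hτ⟩
  tfae_have 4 → 2 := fun ⟨τ, hτ, hQτ⟩ =>
    hτ.isStronglyAbsContinuous_of_tendsto hT hQ hQ0 hQuniv hQτ
  tfae_have 2 → 1 := fun hQP => hQ.isCountablyAdditive_of_tendsto_zero hQ0 fun _ hR hR_anti =>
    IsStronglyAbsContinuous.tendsto_zero hT.measurableSpace_le hQP hQ0 hR hR_anti
  tfae_finish

/-- For a local probability `Q` weakly equivalent to `P`, the following are
equivalent: (1) `Q` is countably additive; (2) `Q` is strongly absolutely continuous with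
respect to `P`; (3) `Q (τ n ≥ T) → 1` for every localizing sequence for `Q`;
(4) `Q (τ n ≥ T) → 1` for some localizing sequence for `Q`. -/
theorem countably_additive_tfae
    {Ω : Type*} {m : MeasurableSpace Ω} (P : Measure Ω) [IsProbabilityMeasure P]
    (ℱ : Filtration ℝ≥0 m)
    (T : Ω → ℝ≥0) (hT : IsStoppingTime ℱ (fun ω => (T ω : WithTop ℝ≥0)))
    (Q : Set Ω → ℝ)
    (hQ01 : ∀ A : Set Ω, MeasurableSet[hT.measurableSpace] A → 0 ≤ Q A ∧ Q A ≤ 1)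
    (hQempty : Q ∅ = 0) (hQuniv : Q Set.univ = 1)
    (hQadd : ∀ A B : Set Ω, MeasurableSet[hT.measurableSpace] A →
      MeasurableSet[hT.measurableSpace] B → Disjoint A B → Q (A ∪ B) = Q A + Q B)
    (hQweak : ∀ A : Set Ω, MeasurableSet[hT.measurableSpace] A → P A = 0 → Q A = 0)
    (hQloc : ∃ τ : ℕ → Ω → ℝ≥0, IsLocalizingSeqFor P ℱ T Q τ) :
    List.TFAE
      [∀ A : ℕ → Set Ω, (∀ k, MeasurableSet[hT.measurableSpace] (A k)) →
          Pairwise (Function.onFun Disjoint A) →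
          HasSum (fun k => Q (A k)) (Q (⋃ k, A k)),
        ∀ ε : ℝ, 0 < ε → ∃ δ : ℝ, 0 < δ ∧ ∀ E : Set Ω,
          MeasurableSet[hT.measurableSpace] E → P E < ENNReal.ofReal δ → Q E < ε,
        ∀ τ : ℕ → Ω → ℝ≥0, IsLocalizingSeqFor P ℱ T Q τ →
          Tendsto (fun n => Q {ω | T ω ≤ τ n ω}) atTop (nhds 1),
        ∃ τ : ℕ → Ω → ℝ≥0, IsLocalizingSeqFor P ℱ T Q τ ∧
          Tendsto (fun n => Q {ω | T ω ≤ τ n ω}) atTop (nhds 1)] :=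
  countably_additive_tfae_general P ℱ T hT Q hQ01 hQuniv hQadd hQweak hQloc
end

section
/- Let Q be a local probability weakly equivalent to P with localizing sequence (τ_n) and associated measures (ν_n), and let Y be the associated density process. Let X be a nonnegative process with deterministic initial value X_0 = x₀ whose stopped value X_σ is F_σ-measurable for every stopping time σ. Then X is a local Q-martingale along (τ_n) (i.e., ∫ X_{τ_n ∧ τ} dν_n = x₀ for every n and every stopping time τ) if and only if Y X is a local P-martingale along (τ_n) (i.e., E_P[Y_{τ_n ∧ τ} X_{τ_n ∧ τ}] = x₀ for every n and every stopping time τ). -/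
/-!
On `F_{τ n ∧ σ}` the measure `ν n`, whose density on `F_{τ n}` is `Y_{τ n}`, has density
`E_P[Y_{τ n} | F_{τ n ∧ σ}] = Y_{τ n ∧ σ}`. Integrating the `F_{τ n ∧ σ}`-measurable
`X_{τ n ∧ σ}` against `ν n` is therefore the same as integrating `Y_{τ n ∧ σ} X_{τ n ∧ σ}`
against `P`, so the two families of identities agree term by term.
-/

open MeasureTheory Filter
open scoped NNReal ENNReal

section Density

variable {Ω : Type*} {m m' m₀ : MeasurableSpace Ω} {μ : Measure[m₀] Ω}

theorem trim_withDensity_ofReal_condExp (hm : m ≤ m₀) [SigmaFinite (μ.trim hm)] {f : Ω → ℝ}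
    (hf : Integrable f μ) (hf_nn : 0 ≤ᵐ[μ] f) :
    (μ.withDensity fun ω => ENNReal.ofReal (μ[f | m] ω)).trim hm
      = (μ.withDensity fun ω => ENNReal.ofReal (f ω)).trim hm := by
  refine @Measure.ext Ω m _ _ fun A hA => ?_
  have hA₀ : MeasurableSet[m₀] A := hm A hA
  rw [trim_measurableSet_eq hm hA, trim_measurableSet_eq hm hA, withDensity_apply _ hA₀,
    withDensity_apply _ hA₀,
    ← ofReal_integral_eq_lintegral_ofReal integrable_condExp.integrableOn
      (ae_restrict_of_ae (condExp_nonneg hf_nn)),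
    ← ofReal_integral_eq_lintegral_ofReal hf.integrableOn (ae_restrict_of_ae hf_nn),
    setIntegral_condExp hm hf hA]

theorem lintegral_withDensity_ofReal_eq_lintegral_condExp_mul (hm : m ≤ m₀)
    [SigmaFinite (μ.trim hm)] {f : Ω → ℝ} (hf : Integrable f μ) (hf_nn : 0 ≤ᵐ[μ] f)
    {g : Ω → ℝ≥0∞} (hg : Measurable[m] g) :
    ∫⁻ ω, g ω ∂(μ.withDensity fun ω => ENNReal.ofReal (f ω))
      = ∫⁻ ω, ENNReal.ofReal (μ[f | m] ω) * g ω ∂μ := by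
  have hg₀ : Measurable[m₀] g := hg.mono hm le_rfl
  calc ∫⁻ ω, g ω ∂(μ.withDensity fun ω => ENNReal.ofReal (f ω))
      = ∫⁻ ω, g ω ∂((μ.withDensity fun ω => ENNReal.ofReal (f ω)).trim hm) :=
        (lintegral_trim hm hg).symm
    _ = ∫⁻ ω, g ω ∂((μ.withDensity fun ω => ENNReal.ofReal (μ[f | m] ω)).trim hm) := by
        rw [trim_withDensity_ofReal_condExp hm hf hf_nn]
    _ = ∫⁻ ω, g ω ∂(μ.withDensity fun ω => ENNReal.ofReal (μ[f | m] ω)) := lintegral_trim hm hg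
    _ = ∫⁻ ω, ENNReal.ofReal (μ[f | m] ω) * g ω ∂μ :=
        lintegral_withDensity_eq_lintegral_mul μ
          (ENNReal.measurable_ofReal.comp (stronglyMeasurable_condExp.measurable.mono hm le_rfl))
          hg₀

theorem eq_trim_withDensity_of_forall_setLIntegral (hm : m ≤ m₀) {ν : Measure[m] Ω}
    {f : Ω → ℝ≥0∞} (hν : ∀ A, MeasurableSet[m] A → ν A = ∫⁻ ω in A, f ω ∂μ) :
    ν = (μ.withDensity f).trim hm :=
  @Measure.ext Ω m _ _ fun A hA => by
    rw [trim_measurableSet_eq hm hA, withDensity_apply _ (hm A hA), hν A hA]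

theorem lintegral_eq_lintegral_condExp_mul_of_density (hmm' : m ≤ m') (hm' : m' ≤ m₀)
    [SigmaFinite (μ.trim (hmm'.trans hm'))] {ν : Measure[m'] Ω} [IsFiniteMeasure ν]
    {f : Ω → ℝ} (hf : Measurable[m₀] f) (hf_nn : ∀ ω, 0 ≤ f ω)
    (hν : ∀ A, MeasurableSet[m'] A → ν A = ∫⁻ ω in A, ENNReal.ofReal (f ω) ∂μ)
    {g : Ω → ℝ≥0∞} (hg : Measurable[m] g) :
    ∫⁻ ω, g ω ∂ν = ∫⁻ ω, ENNReal.ofReal (μ[f | m] ω) * g ω ∂μ := by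
  have hf_int : Integrable f μ := by
    refine ⟨hf.aestronglyMeasurable, ?_⟩
    rw [hasFiniteIntegral_iff_ofReal (Eventually.of_forall hf_nn), ← setLIntegral_univ,
      ← hν _ MeasurableSet.univ]
    exact measure_lt_top ν _
  rw [eq_trim_withDensity_of_forall_setLIntegral hm' hν, lintegral_trim hm' (hg.mono hmm' le_rfl),
    lintegral_withDensity_ofReal_eq_lintegral_condExp_mul (hmm'.trans hm') hf_int
      (Eventually.of_forall hf_nn) hg]

end Density

namespace MeasureTheory.IsStoppingTime

variable {Ω ι : Type*} {m : MeasurableSpace Ω} [LinearOrder ι] {ℱ : Filtration ι m}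
  {τ σ : Ω → ι}

theorem coe_min (hτ : IsStoppingTime ℱ fun ω => (τ ω : WithTop ι))
    (hσ : IsStoppingTime ℱ fun ω => (σ ω : WithTop ι)) :
    IsStoppingTime ℱ fun ω => ((min (τ ω) (σ ω) : ι) : WithTop ι) := by
  simpa only [WithTop.coe_min] using hτ.min hσ

theorem measurableSpace_coe_min (hτ : IsStoppingTime ℱ fun ω => (τ ω : WithTop ι))
    (hσ : IsStoppingTime ℱ fun ω => (σ ω : WithTop ι)) :
    (hτ.coe_min hσ).measurableSpace = (hτ.min hσ).measurableSpace :=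
  le_antisymm (measurableSpace_mono _ _ fun _ => (WithTop.coe_min _ _).le)
    (measurableSpace_mono _ _ fun _ => (WithTop.coe_min _ _).ge)

end MeasureTheory.IsStoppingTime

theorem local_Q_martingale_iff_density_local_P_martingale_general
    {Ω : Type*} {m : MeasurableSpace Ω} (P : Measure Ω) [IsProbabilityMeasure P]
    (ℱ : Filtration ℝ≥0 m)
    -- Q is a finitely additive probability, weakly absolutely continuous w.r.t. P:
    (Q : Set Ω → ℝ)
    (hQuniv : Q Set.univ = 1)
    -- τ is a localizing sequence for Q, with associated measures ν n on F_{τ n}: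
    (τ : ℕ → Ω → ℝ≥0) (hτ : ∀ n, IsStoppingTime ℱ (fun ω => (τ n ω : WithTop ℝ≥0)))
    (ν : ∀ n : ℕ, @Measure Ω ((hτ n).measurableSpace))
    (hνQ : ∀ n, ∀ A : Set Ω, MeasurableSet[(hτ n).measurableSpace] A → Q A = (ν n A).toReal)
    -- Y is the associated density process:
    (Y : ℝ≥0 → Ω → ℝ)
    (hYnonneg : ∀ t ω, 0 ≤ Y t ω)
    (hYstopmeas : ∀ n, Measurable[(hτ n).measurableSpace] fun ω => Y (τ n ω) ω)
    (hYdensity : ∀ n, ∀ A : Set Ω, MeasurableSet[(hτ n).measurableSpace] A →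
      ν n A = ∫⁻ ω in A, ENNReal.ofReal (Y (τ n ω) ω) ∂P)
    (hYmart : ∀ n, ∀ σ : Ω → ℝ≥0, ∀ hσ : IsStoppingTime ℱ (fun ω => (σ ω : WithTop ℝ≥0)),
      P[(fun ω => Y (τ n ω) ω) | ((hτ n).min hσ).measurableSpace]
        =ᵐ[P] fun ω => Y (min (τ n ω) (σ ω)) ω)
    -- X is a nonnegative process with deterministic initial value x₀,
    -- whose stopped value X_σ is F_σ-measurable for every stopping time σ:
    (X : ℝ≥0 → Ω → ℝ) (x₀ : ℝ)
    (hXstopmeas : ∀ (σ : Ω → ℝ≥0) (hσ : IsStoppingTime ℱ (fun ω => (σ ω : WithTop ℝ≥0))),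
      Measurable[hσ.measurableSpace] fun ω => X (σ ω) ω) :
    (∀ n, ∀ σ : Ω → ℝ≥0, IsStoppingTime ℱ (fun ω => (σ ω : WithTop ℝ≥0)) →
        ∫⁻ ω, ENNReal.ofReal (X (min (τ n ω) (σ ω)) ω) ∂(ν n) = ENNReal.ofReal x₀) ↔
      (∀ n, ∀ σ : Ω → ℝ≥0, IsStoppingTime ℱ (fun ω => (σ ω : WithTop ℝ≥0)) →
        ∫⁻ ω, ENNReal.ofReal (Y (min (τ n ω) (σ ω)) ω * X (min (τ n ω) (σ ω)) ω) ∂P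
          = ENNReal.ofReal x₀) := by
  suffices key : ∀ n (σ : Ω → ℝ≥0) (hσ : IsStoppingTime ℱ fun ω => (σ ω : WithTop ℝ≥0)),
      ∫⁻ ω, ENNReal.ofReal (X (min (τ n ω) (σ ω)) ω) ∂(ν n)
        = ∫⁻ ω, ENNReal.ofReal (Y (min (τ n ω) (σ ω)) ω * X (min (τ n ω) (σ ω)) ω) ∂P by
    exact forall_congr' fun n => forall_congr' fun σ => forall_congr' fun hσ => by rw [key n σ hσ]
  intro n σ hσ
  have : IsFiniteMeasure (ν n) := ⟨by
    refine lt_top_iff_ne_top.2 fun h => ?_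
    simpa [h, hQuniv] using hνQ n Set.univ MeasurableSet.univ⟩
  have hX : Measurable[((hτ n).min hσ).measurableSpace]
      fun ω => ENNReal.ofReal (X (min (τ n ω) (σ ω)) ω) :=
    ENNReal.measurable_ofReal.comp
      ((hτ n).measurableSpace_coe_min hσ ▸ hXstopmeas _ ((hτ n).coe_min hσ))
  rw [lintegral_eq_lintegral_condExp_mul_of_density
    (IsStoppingTime.measurableSpace_mono _ _ fun _ => min_le_left _ _) (hτ n).measurableSpace_le
    ((hYstopmeas n).mono (hτ n).measurableSpace_le le_rfl) (fun _ => hYnonneg _ _) (hYdensity n) hX]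
  refine lintegral_congr_ae ((hYmart n σ hσ).mono fun ω hω => ?_)
  dsimp only at hω ⊢
  rw [hω, ENNReal.ofReal_mul (hYnonneg _ _)]

/-- Let `Q` be a local probability weakly equivalent to `P`, with localizing
sequence `τ`, associated countably additive measures `ν n` on `F_{τ n}`, and associated
density process `Y` (so `Y_{τ n}` is a Radon–Nikodym density of `ν n` w.r.t. `P` on `F_{τ n}`
and satisfies the sampled martingale identity). Let `X` be a nonnegative process with
deterministic initial value `x₀` whose stopped values are measurable for the stopped
σ-algebras. Then `X` is a local `Q`-martingale along `τ` (i.e. `∫ X_{τ n ∧ σ} dν n = x₀` for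
all `n` and all stopping times `σ`) if and only if `Y X` is a local `P`-martingale along `τ`
(i.e. `E_P [Y_{τ n ∧ σ} X_{τ n ∧ σ}] = x₀` for all `n` and all stopping times `σ`). -/
theorem local_Q_martingale_iff_density_local_P_martingale
    {Ω : Type*} {m : MeasurableSpace Ω} (P : Measure Ω) [IsProbabilityMeasure P]
    (ℱ : Filtration ℝ≥0 m)
    (T : Ω → ℝ≥0) (hT : IsStoppingTime ℱ (fun ω => (T ω : WithTop ℝ≥0)))
    -- Q is a finitely additive probability, weakly absolutely continuous w.r.t. P:
    (Q : Set Ω → ℝ)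
    (hQ01 : ∀ A : Set Ω, MeasurableSet[hT.measurableSpace] A → 0 ≤ Q A ∧ Q A ≤ 1)
    (hQempty : Q ∅ = 0) (hQuniv : Q Set.univ = 1)
    (hQadd : ∀ A B : Set Ω, MeasurableSet[hT.measurableSpace] A →
      MeasurableSet[hT.measurableSpace] B → Disjoint A B → Q (A ∪ B) = Q A + Q B)
    (hQweak : ∀ A : Set Ω, MeasurableSet[hT.measurableSpace] A → P A = 0 → Q A = 0)
    -- τ is a localizing sequence for Q, with associated measures ν n on F_{τ n}:
    (τ : ℕ → Ω → ℝ≥0) (hτ : ∀ n, IsStoppingTime ℱ (fun ω => (τ n ω : WithTop ℝ≥0)))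
    (hτmono : ∀ n, τ n ≤ τ (n + 1))
    (hτT : Tendsto (fun n => P {ω | T ω ≤ τ n ω}) atTop (nhds 1))
    (ν : ∀ n : ℕ, @Measure Ω ((hτ n).measurableSpace))
    (hνQ : ∀ n, ∀ A : Set Ω, MeasurableSet[(hτ n).measurableSpace] A → Q A = (ν n A).toReal)
    (hνP : ∀ n, ∀ A : Set Ω, MeasurableSet[(hτ n).measurableSpace] A → (ν n A = 0 ↔ P A = 0))
    -- Y is the associated density process:
    (Y : ℝ≥0 → Ω → ℝ)
    (hYnonneg : ∀ t ω, 0 ≤ Y t ω)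
    (hYadapted : Adapted ℱ Y)
    (hYstopmeas : ∀ n, Measurable[(hτ n).measurableSpace] fun ω => Y (τ n ω) ω)
    (hYdensity : ∀ n, ∀ A : Set Ω, MeasurableSet[(hτ n).measurableSpace] A →
      ν n A = ∫⁻ ω in A, ENNReal.ofReal (Y (τ n ω) ω) ∂P)
    (hYmart : ∀ n, ∀ σ : Ω → ℝ≥0, ∀ hσ : IsStoppingTime ℱ (fun ω => (σ ω : WithTop ℝ≥0)),
      P[(fun ω => Y (τ n ω) ω) | ((hτ n).min hσ).measurableSpace]
        =ᵐ[P] fun ω => Y (min (τ n ω) (σ ω)) ω)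
    -- X is a nonnegative process with deterministic initial value x₀,
    -- whose stopped value X_σ is F_σ-measurable for every stopping time σ:
    (X : ℝ≥0 → Ω → ℝ) (x₀ : ℝ)
    (hXnonneg : ∀ t ω, 0 ≤ X t ω)
    (hX0 : ∀ ω, X 0 ω = x₀)
    (hXstopmeas : ∀ (σ : Ω → ℝ≥0) (hσ : IsStoppingTime ℱ (fun ω => (σ ω : WithTop ℝ≥0))),
      Measurable[hσ.measurableSpace] fun ω => X (σ ω) ω) :
    (∀ n, ∀ σ : Ω → ℝ≥0, IsStoppingTime ℱ (fun ω => (σ ω : WithTop ℝ≥0)) →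
        ∫⁻ ω, ENNReal.ofReal (X (min (τ n ω) (σ ω)) ω) ∂(ν n) = ENNReal.ofReal x₀) ↔
      (∀ n, ∀ σ : Ω → ℝ≥0, IsStoppingTime ℱ (fun ω => (σ ω : WithTop ℝ≥0)) →
        ∫⁻ ω, ENNReal.ofReal (Y (min (τ n ω) (σ ω)) ω * X (min (τ n ω) (σ ω)) ω) ∂P
          = ENNReal.ofReal x₀) :=
  local_Q_martingale_iff_density_local_P_martingale_general P ℱ Q hQuniv τ hτ ν hνQ Y hYnonneg
    hYstopmeas hYdensity hYmart X x₀ hXstopmeas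
end

section
/- Let C be a set of P-a.s. nonnegative random variables on a probability space (Ω, F, P). If there exists a measurable function Z : Ω → ℝ with Z ≥ 0 P-a.s., P(Z > 0) = 1, and ∫ Z·f dP ≤ 1 for every f ∈ C, then C is bounded in probability. -/
open MeasureTheory

/-- If there exists a `P`-a.s. nonnegative measurable `Z` with `P (Z > 0) = 1`
and `∫ Z · f dP ≤ 1` for every `f ∈ C`, then `C` is bounded in probability. -/
theorem bounded_in_probability_of_separating_density
    {Ω : Type*} [MeasurableSpace Ω] (P : Measure Ω) [IsProbabilityMeasure P]
    (C : Set (Ω → ℝ))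
    (hCmeas : ∀ f ∈ C, Measurable f)
    (hCnonneg : ∀ f ∈ C, ∀ᵐ ω ∂P, 0 ≤ f ω)
    (Z : Ω → ℝ) (hZmeas : Measurable Z) (hZnonneg : ∀ᵐ ω ∂P, 0 ≤ Z ω)
    (hZpos : P {ω | 0 < Z ω} = 1)
    (hZsep : ∀ f ∈ C, ∫⁻ ω, ENNReal.ofReal (Z ω * f ω) ∂P ≤ 1) :
    ∀ ε : ℝ, 0 < ε → ∃ M : ℝ, 0 < M ∧ ∀ f ∈ C, P {ω | M < f ω} ≤ ENNReal.ofReal ε := by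
  intro ε hε
  -- P {Z ≤ 0} = 0
  have h0 : P {ω | Z ω ≤ 0} = 0 := by
    have hc : {ω | Z ω ≤ 0} = {ω | 0 < Z ω}ᶜ := by
      ext ω; simp [not_lt]
    rw [hc, measure_compl (measurableSet_lt measurable_const hZmeas) (measure_ne_top _ _), hZpos]
    simp
  -- find n with P {Z < 1/(n+1)} ≤ ofReal (ε/2)
  have hmono : Antitone (fun n : ℕ => {ω | Z ω < 1 / (n + 1 : ℝ)}) := by
    intro m n hmn ω hω
    simp only [Set.mem_setOf_eq] at hω ⊢
    refine lt_of_lt_of_le hω ?_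
    apply one_div_le_one_div_of_le
    · positivity
    · exact_mod_cast Nat.succ_le_succ hmn
  have hInter : (⋂ n : ℕ, {ω | Z ω < 1 / (n + 1 : ℝ)}) = {ω | Z ω ≤ 0} := by
    ext ω
    simp only [Set.mem_iInter, Set.mem_setOf_eq]
    constructor
    · intro h
      by_contra hpos
      push_neg at hpos
      obtain ⟨n, hn⟩ := exists_nat_one_div_lt hpos
      exact absurd (h n) (not_lt.2 hn.le)
    · intro h n
      exact lt_of_le_of_lt h (by positivity)
  have htend := tendsto_measure_iInter_atTop (μ := P)
    (s := fun n : ℕ => {ω | Z ω < 1 / (n + 1 : ℝ)})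
    (fun n => (measurableSet_lt hZmeas measurable_const).nullMeasurableSet) hmono
    ⟨0, measure_ne_top _ _⟩
  rw [hInter, h0] at htend
  have hhalf : (0 : ENNReal) < ENNReal.ofReal (ε / 2) := by
    simp [ENNReal.ofReal_pos]; linarith
  obtain ⟨n, hn⟩ := (htend.eventually_le_const hhalf).exists
  set δ : ℝ := 1 / (n + 1 : ℝ) with hδ
  have hδpos : 0 < δ := by positivity
  refine ⟨2 / (δ * ε), by positivity, ?_⟩
  intro f hf
  set M : ℝ := 2 / (δ * ε) with hM
  have hMpos : 0 < M := by positivity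
  have hδM : δ * M = 2 / ε := by
    rw [hM]; field_simp
  -- split the event
  have hsub : {ω | M < f ω} ⊆ {ω | Z ω < δ} ∪ {ω | ENNReal.ofReal (2/ε) ≤ ENNReal.ofReal (Z ω * f ω)} := by
    intro ω hω
    simp only [Set.mem_setOf_eq, Set.mem_union]
    by_cases hZω : Z ω < δ
    · exact Or.inl hZω
    · right
      push_neg at hZω
      apply ENNReal.ofReal_le_ofReal
      rw [← hδM]
      exact mul_le_mul hZω hω.le hMpos.le (hδpos.le.trans hZω)
  calc P {ω | M < f ω}
      ≤ P ({ω | Z ω < δ} ∪ {ω | ENNReal.ofReal (2/ε) ≤ ENNReal.ofReal (Z ω * f ω)}) :=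
        measure_mono hsub
    _ ≤ P {ω | Z ω < δ} + P {ω | ENNReal.ofReal (2/ε) ≤ ENNReal.ofReal (Z ω * f ω)} :=
        measure_union_le _ _
    _ ≤ ENNReal.ofReal (ε/2) + ENNReal.ofReal (ε/2) := by
        gcongr
        · exact hn
        · have hmarkov := meas_ge_le_lintegral_div
            (μ := P) (f := fun ω => ENNReal.ofReal (Z ω * f ω))
            ((hZmeas.mul (hCmeas f hf)).ennreal_ofReal.aemeasurable)
            (ε := ENNReal.ofReal (2/ε)) (by simp only [ne_eq, ENNReal.ofReal_eq_zero, not_le]; positivity)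
            ENNReal.ofReal_ne_top
          refine hmarkov.trans ?_
          refine (ENNReal.div_le_div_right (hZsep f hf) _).trans ?_
          rw [ENNReal.le_ofReal_iff_toReal_le (by simp [ENNReal.div_eq_top]; linarith) (by positivity)]
          rw [ENNReal.toReal_div]
          simp only [ENNReal.toReal_one, ENNReal.toReal_ofReal (by positivity : (0:ℝ) ≤ 2/ε)]
          rw [one_div_div]
    _ = ENNReal.ofReal ε := by
        rw [← ENNReal.ofReal_add (by linarith) (by linarith)]
        ring_nf
end

section
/- Let Z be a measurable function on a probability space (Ω, F, P) with Z ≥ 0 P-a.s. and P(Z > 0) = 1. Let (ξ_k)_{k∈ℕ} be a sequence of P-a.s. nonnegative measurable functions and (x_k)_{k∈ℕ} a sequence of nonnegative reals with lim_{k→∞} x_k = 0 and ∫ Z·ξ_k dP ≤ x_k for every k. If (ξ_k) converges in probability to a nonnegative measurable function ξ, then P(ξ = 0) = 1. -/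
open MeasureTheory Filter

/-!
Pass to a subsequence along which `ξₖ → ξ` almost surely. Fatou's lemma then bounds
`∫ Z ξ dP` by `liminf xₖ = 0`, so `Z ξ = 0` almost surely, and since `Z > 0` almost surely,
`ξ = 0` almost surely.
-/

open scoped ENNReal Topology

namespace MeasureTheory

variable {α : Type*} [MeasurableSpace α] {μ : Measure α}

theorem lintegral_le_liminf_of_ae_tendsto {F : ℕ → α → ℝ≥0∞} {G : α → ℝ≥0∞}
    (hF : ∀ n, AEMeasurable (F n) μ)
    (hFG : ∀ᵐ a ∂μ, Tendsto (fun n => F n a) atTop (𝓝 (G a))) :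
    ∫⁻ a, G a ∂μ ≤ liminf (fun n => ∫⁻ a, F n a ∂μ) atTop :=
  lintegral_congr_ae (by filter_upwards [hFG] with a ha using ha.liminf_eq) ▸
    lintegral_liminf_le' hF

theorem ae_eq_zero_of_ae_tendsto_of_lintegral_tendsto_zero {F : ℕ → α → ℝ≥0∞} {G : α → ℝ≥0∞}
    (hF : ∀ n, AEMeasurable (F n) μ)
    (hFG : ∀ᵐ a ∂μ, Tendsto (fun n => F n a) atTop (𝓝 (G a)))
    (hF0 : Tendsto (fun n => ∫⁻ a, F n a ∂μ) atTop (𝓝 0)) :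
    G =ᵐ[μ] 0 := by
  have hG : ∫⁻ a, G a ∂μ = 0 :=
    nonpos_iff_eq_zero.mp ((lintegral_le_liminf_of_ae_tendsto hF hFG).trans_eq hF0.liminf_eq)
  exact (lintegral_eq_zero_iff' (aemeasurable_of_tendsto_metrizable_ae' hF hFG)).mp hG

end MeasureTheory

theorem limit_vanishes_of_deflated_expectations_vanish_general
    {Ω : Type*} [MeasurableSpace Ω] (P : Measure Ω) [IsProbabilityMeasure P]
    (Z : Ω → ℝ) (hZmeas : Measurable Z)
    (hZpos : P {ω | 0 < Z ω} = 1)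
    (ξseq : ℕ → Ω → ℝ) (hξseqmeas : ∀ k, Measurable (ξseq k))
    (x : ℕ → ℝ)
    (hxlim : Tendsto x atTop (nhds 0))
    (hsep : ∀ k, ∫⁻ ω, ENNReal.ofReal (Z ω * ξseq k ω) ∂P ≤ ENNReal.ofReal (x k))
    (ξ : Ω → ℝ) (hξnonneg : ∀ᵐ ω ∂P, 0 ≤ ξ ω)
    (hconv : TendstoInMeasure P ξseq atTop ξ) :
    P {ω | ξ ω = 0} = 1 := by
  obtain ⟨ns, hns, hξae⟩ := hconv.exists_seq_tendsto_ae
  have hx0 : Tendsto (fun i => ENNReal.ofReal (x (ns i))) atTop (𝓝 0) := by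
    simpa using ENNReal.tendsto_ofReal (hxlim.comp hns.tendsto_atTop)
  have hZξ : (fun ω => ENNReal.ofReal (Z ω * ξ ω)) =ᵐ[P] 0 := by
    refine ae_eq_zero_of_ae_tendsto_of_lintegral_tendsto_zero
      (F := fun i ω => ENNReal.ofReal (Z ω * ξseq (ns i) ω))
      (fun i => (hZmeas.mul (hξseqmeas (ns i))).ennreal_ofReal.aemeasurable) ?_
      (tendsto_of_tendsto_of_tendsto_of_le_of_le tendsto_const_nhds hx0
        (fun _ => zero_le) (fun i => hsep (ns i)))
    filter_upwards [hξae] with ω hω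
    exact ENNReal.tendsto_ofReal (hω.const_mul (Z ω))
  have hZae : ∀ᵐ ω ∂P, 0 < Z ω := by
    rwa [ae_iff_measure_eq (measurableSet_lt measurable_const hZmeas).nullMeasurableSet,
      measure_univ]
  have hξ0 : ∀ᵐ ω ∂P, ξ ω = 0 := by
    filter_upwards [hZξ, hZae, hξnonneg] with ω hZξω hZω hξω
    have : Z ω * ξ ω ≤ 0 := ENNReal.ofReal_eq_zero.mp hZξω
    exact le_antisymm (nonpos_of_mul_nonpos_right this hZω) hξω
  rw [← measure_univ (μ := P)]
  exact measure_congr (eventuallyEq_univ.mpr hξ0)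

/-- If `Z ≥ 0` a.s. with `P (Z > 0) = 1`, the `ξ k` are a.s. nonnegative with
`∫ Z · ξ k dP ≤ x k` where `x k → 0`, `x k ≥ 0`, and `ξ k → ξ` in probability with `ξ`
nonnegative, then `P (ξ = 0) = 1`. -/
theorem limit_vanishes_of_deflated_expectations_vanish
    {Ω : Type*} [MeasurableSpace Ω] (P : Measure Ω) [IsProbabilityMeasure P]
    (Z : Ω → ℝ) (hZmeas : Measurable Z) (hZnonneg : ∀ᵐ ω ∂P, 0 ≤ Z ω)
    (hZpos : P {ω | 0 < Z ω} = 1)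
    (ξseq : ℕ → Ω → ℝ) (hξseqmeas : ∀ k, Measurable (ξseq k))
    (hξseqnonneg : ∀ k, ∀ᵐ ω ∂P, 0 ≤ ξseq k ω)
    (x : ℕ → ℝ) (hxnonneg : ∀ k, 0 ≤ x k)
    (hxlim : Tendsto x atTop (nhds 0))
    (hsep : ∀ k, ∫⁻ ω, ENNReal.ofReal (Z ω * ξseq k ω) ∂P ≤ ENNReal.ofReal (x k))
    (ξ : Ω → ℝ) (hξmeas : Measurable ξ) (hξnonneg : ∀ᵐ ω ∂P, 0 ≤ ξ ω)
    (hconv : TendstoInMeasure P ξseq atTop ξ) :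
    P {ω | ξ ω = 0} = 1 :=
  limit_vanishes_of_deflated_expectations_vanish_general P Z hZmeas hZpos ξseq hξseqmeas x hxlim
    hsep ξ hξnonneg hconv
end
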